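/- arXiv:2208.06288 — 4 statements merged into one kernel-verified Lean document; each statement's English description precedes it below -/
import Mathlib

section
/- The product of a countable family of π-spaces (in particular, of a nonempty finite family of π-spaces) is a π-space. -/
open Set Topology

namespace PiSpacePaper

/-- The restriction `p↾n` of `p : ℕ → ℕ`, as a list of length `n`. -/
def restrictSeq (p : ℕ → ℕ) (n : ℕ) : List ℕ := (List.range n).map p

/-- The basic clopen set `S_a` of the Baire space. -/
def cyl (a : List ℕ) : Set (ℕ → ℕ) := {p | restrictSeq p a.length = a}

/-- The fruit `⋂ n, V (p↾n)` of a branch `p` in a Souslin scheme `V`. -/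
def fruit {X : Type*} (V : List ℕ → Set X) (p : ℕ → ℕ) : Set X :=
  ⋂ n : ℕ, V (restrictSeq p n)

/-- A Souslin scheme `V` covers the set `s`. -/
def Covers {X : Type*} (V : List ℕ → Set X) (s : Set X) : Prop :=
  V [] = s ∧ ∀ a : List ℕ, V a = ⋃ n : ℕ, V (a ++ [n])

/-- A Souslin scheme `V` partitions the set `s`. -/
def Partitions {X : Type*} (V : List ℕ → Set X) (s : Set X) : Prop :=
  Covers V s ∧ ∀ (a : List ℕ) (n m : ℕ), n ≠ m → V (a ++ [n]) ∩ V (a ++ [m]) = ∅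

/-- A Souslin scheme is complete iff all fruits are nonempty. -/
def Complete {X : Type*} (V : List ℕ → Set X) : Prop :=
  ∀ p : ℕ → ℕ, (fruit V p).Nonempty

/-- A Souslin scheme has strict branches iff every fruit is a singleton. -/
def StrictBranches {X : Type*} (V : List ℕ → Set X) : Prop :=
  ∀ p : ℕ → ℕ, ∃ x : X, fruit V p = {x}

/-- A Souslin scheme is open iff all its members are open sets. -/
def OpenScheme {X : Type*} [TopologicalSpace X] (V : List ℕ → Set X) : Prop :=
  ∀ a : List ℕ, IsOpen (V a)

/-- `flesh V = ⋃ a, V a`. -/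
def flesh {X : Type*} (V : List ℕ → Set X) : Set X := ⋃ a : List ℕ, V a

/-- `branches V x = {q ∈ ℕ^ℕ : x ∈ fruit V q}`. -/
def branches {X : Type*} (V : List ℕ → Set X) (x : X) : Set (ℕ → ℕ) :=
  {q | x ∈ fruit V q}

/-- A family `γ` of subsets is a π-net for a space: all members are nonempty and every
nonempty open set contains a member. -/
def IsPiNet {X : Type*} [TopologicalSpace X] (γ : Set (Set X)) : Prop :=
  (∀ G ∈ γ, G.Nonempty) ∧
  ∀ U : Set X, IsOpen U → U.Nonempty → ∃ G ∈ γ, G ⊆ U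

/-- A family `γ` of subsets is a π-base for a space: all members are nonempty open sets
and every nonempty open set contains a member. -/
def IsPiBase {X : Type*} [TopologicalSpace X] (γ : Set (Set X)) : Prop :=
  (∀ G ∈ γ, IsOpen G ∧ G.Nonempty) ∧
  ∀ U : Set X, IsOpen U → U.Nonempty → ∃ G ∈ γ, G ⊆ U

/-- A π-space: there is an open Souslin scheme that partitions the space, has strict
branches, and whose family of members is a π-base. -/
def IsPiSpace (X : Type*) [TopologicalSpace X] : Prop :=
  ∃ V : List ℕ → Set X, OpenScheme V ∧ Partitions V Set.univ ∧ StrictBranches V ∧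
    IsPiBase {S : Set X | ∃ a : List ℕ, S = V a}

/-- A Lusin π-base for a space. -/
def IsLusinPiBase {X : Type*} [TopologicalSpace X] (V : List ℕ → Set X) : Prop :=
  OpenScheme V ∧ Partitions V Set.univ ∧ StrictBranches V ∧
  ∀ (x : X) (U : Set X), IsOpen U → x ∈ U →
    ∃ (a : List ℕ) (n : ℕ), x ∈ V a ∧ (⋃ i : ℕ, ⋃ _ : n ≤ i, V (a ++ [i])) ⊆ U

/-- A map is quasi-open iff the image of every nonempty open set has nonempty interior. -/
def IsQuasiOpen {X Y : Type*} [TopologicalSpace X] [TopologicalSpace Y] (f : X → Y) : Prop :=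
  ∀ U : Set X, IsOpen U → U.Nonempty → (interior (f '' U)).Nonempty

/-- A π-net Souslin scheme on a space `X`: for every finite sequence `a`, the family
`{V b : b ⊒ a}` is a π-net for the subspace `V a` of `X` (whose nonempty open sets are
exactly the nonempty sets `U ∩ V a` with `U` open in `X`). -/
def IsPiNetScheme {X : Type*} [TopologicalSpace X] (V : List ℕ → Set X) : Prop :=
  ∀ a : List ℕ,
    (∀ b : List ℕ, a <+: b → (V b).Nonempty) ∧
    ∀ U : Set X, IsOpen U → (U ∩ V a).Nonempty → ∃ b : List ℕ, a <+: b ∧ V b ⊆ U ∩ V a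

/-- A π-base Souslin scheme on a space is an open π-net Souslin scheme. -/
def IsPiBaseScheme {X : Type*} [TopologicalSpace X] (V : List ℕ → Set X) : Prop :=
  OpenScheme V ∧ IsPiNetScheme V

/-- A selector on a Souslin scheme `V`: a surjection of the Baire space onto `flesh V`
such that every fiber `f⁻¹(x)` is a dense subset of the subspace `branches V x` of the
Baire space. -/
def IsSelector {X : Type*} (V : List ℕ → Set X) (f : (ℕ → ℕ) → X) : Prop :=
  Set.range f = flesh V ∧
  ∀ x ∈ flesh V, f ⁻¹' {x} ⊆ branches V x ∧ branches V x ⊆ closure (f ⁻¹' {x})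

/-- The topology `σ_{τ,f}` on the Baire space, generated by the subbase consisting of the
`τ`-preimages under `f` together with the basic sets `S_a`. -/
def sigmaTop {X : Type*} [TopologicalSpace X] (f : (ℕ → ℕ) → X) :
    TopologicalSpace (ℕ → ℕ) :=
  TopologicalSpace.generateFrom
    ({S : Set (ℕ → ℕ) | ∃ U : Set X, IsOpen U ∧ S = f ⁻¹' U} ∪
      {S : Set (ℕ → ℕ) | ∃ a : List ℕ, S = cyl a})

/-- The Souslin scheme `V^g`, where `V^g_a = V_{g ∘ a}`. -/
def schemeComp {X : Type*} (V : List ℕ → Set X) (g : ℕ → ℕ) : List ℕ → Set X :=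
  fun a => V (a.map g)

/-- A subset of the Baire space is dense-in-itself iff it has no isolated points. -/
def DenseInItself (B : Set (ℕ → ℕ)) : Prop :=
  ∀ q ∈ B, q ∈ closure (B \ {q})

/-- `X` is a continuous open image of a π-space. -/
def IsContinuousOpenImageOfPiSpace (X : Type) [TopologicalSpace X] : Prop :=
  ∃ (Y : Type) (_ : TopologicalSpace Y) (f : Y → X),
    IsPiSpace Y ∧ Continuous f ∧ IsOpenMap f ∧ Function.Surjective f

/-- The topology `τ_N` on the Baire space generated by the sets `U \ A` with `U` open in
the Baire space and `A` nowhere dense in the Baire space. -/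
def tauN : TopologicalSpace (ℕ → ℕ) :=
  TopologicalSpace.generateFrom
    {S : Set (ℕ → ℕ) | ∃ U A : Set (ℕ → ℕ), IsOpen U ∧ IsNowhereDense A ∧ S = U \ A}

section Statement2Aux

open Classical

variable {ι : Type*}

/-- Subsequence of `a` at positions `k < a.length` with `e k = i`. -/
noncomputable def seqAt (e : ℕ → ι) (i : ι) (a : List ℕ) : List ℕ :=
  ((List.range a.length).filter (fun k => decide (e k = i))).map (fun k => a.getD k 0)

lemma seqAt_nil (e : ℕ → ι) (i : ι) : seqAt e i [] = [] := rfl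

lemma seqAt_append (e : ℕ → ι) (i : ι) (a : List ℕ) (n : ℕ) :
    seqAt e i (a ++ [n]) =
      if e a.length = i then seqAt e i a ++ [n] else seqAt e i a := by
  unfold seqAt
  rw [List.length_append, List.length_singleton, List.range_succ, List.filter_append,
    List.map_append]
  have h1 : ∀ (L : List ℕ), ((List.range a.length).filter (fun k => decide (e k = i))).map
      (fun k => ((a ++ L).getD k 0)) =
      ((List.range a.length).filter (fun k => decide (e k = i))).map (fun k => a.getD k 0) := by
    intro L
    apply List.map_congr_left
    intro k hk
    have : k < a.length := List.mem_range.mp (List.mem_filter.mp hk).1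
    exact List.getD_append _ _ _ _ this
  rw [h1]
  by_cases hi : e a.length = i
  · rw [if_pos hi, List.filter_singleton]
    simp only [hi, decide_true, cond_true, List.map_singleton]
    rw [List.getD_append_right _ _ _ _ le_rfl]
    simp
  · rw [if_neg hi, List.filter_singleton]
    simp [hi]

lemma seqAt_eq_nil (e : ℕ → ι) (i : ι) (a : List ℕ)
    (h : ∀ k < a.length, e k ≠ i) : seqAt e i a = [] := by
  unfold seqAt
  rw [List.filter_eq_nil_iff.mpr, List.map_nil]
  intro k hk
  simpa using h k (List.mem_range.mp hk)

lemma restrictSeq_length (p : ℕ → ℕ) (n : ℕ) : (PiSpacePaper.restrictSeq p n).length = n := by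
  simp [PiSpacePaper.restrictSeq]

lemma seqAt_restrictSeq (e : ℕ → ι) (i : ι) (p : ℕ → ℕ) (n : ℕ) :
    seqAt e i (PiSpacePaper.restrictSeq p n) =
      ((List.range n).filter (fun k => decide (e k = i))).map p := by
  unfold seqAt
  rw [restrictSeq_length]
  apply List.map_congr_left
  intro k hk
  have hkn : k < n := List.mem_range.mp (List.mem_filter.mp hk).1
  rw [List.getD_eq_getElem _ _ (by simpa [restrictSeq_length] using hkn)]
  simp [PiSpacePaper.restrictSeq]

lemma filter_range_eq_map_nth (P : ℕ → Prop) [DecidablePred P] (n : ℕ) :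
    (List.range n).filter (fun k => decide (P k)) =
      (List.range (Nat.count P n)).map (Nat.nth P) := by
  induction n with
  | zero => simp
  | succ n ih =>
    rw [List.range_succ, List.filter_append, ih, Nat.count_succ]
    by_cases hP : P n
    · rw [if_pos hP, List.filter_singleton]
      simp only [hP, decide_true, cond_true]
      rw [List.range_succ, List.map_append, List.map_singleton, Nat.nth_count hP]
    · rw [if_neg hP, List.filter_singleton]
      simp [hP]

lemma eq_map_range_getD (l : List ℕ) :
    l = (List.range l.length).map (fun k => l.getD k 0) := by
  apply List.ext_getElem
  · simp
  · intro k h1 h2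
    rw [List.getElem_map, List.getElem_range, List.getD_eq_getElem _ _ h1]

lemma range_map_prefix {α : Type*} (f : ℕ → α) {m c : ℕ} (h : m ≤ c) :
    (List.range m).map f <+: (List.range c).map f := by
  have := List.take_prefix m (List.range c)
  rw [List.take_range, Nat.min_eq_left h] at this
  exact this.map f

end Statement2Aux

/-- The product of a countable (in particular, nonempty finite) family of
π-spaces is a π-space. -/
theorem statement2 {ι : Type} [Countable ι] [Nonempty ι] (X : ι → Type)
    [∀ i, TopologicalSpace (X i)] (h : ∀ i, IsPiSpace (X i)) :
    IsPiSpace (∀ i, X i) := by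
  classical
  choose V hVopen hVpart hVstrict hVbase using h
  have hVuniv : ∀ i, V i [] = Set.univ := fun i => (hVpart i).1.1
  have hVunion : ∀ i a, V i a = ⋃ n, V i (a ++ [n]) := fun i => (hVpart i).1.2
  have hVdisj : ∀ i (a : List ℕ) (n m : ℕ), n ≠ m → V i (a ++ [n]) ∩ V i (a ++ [m]) = ∅ :=
    fun i => (hVpart i).2
  have hVne : ∀ i a, (V i a).Nonempty := fun i a => ((hVbase i).1 _ ⟨a, rfl⟩).2
  have hmono : ∀ i {a b : List ℕ}, a <+: b → V i b ⊆ V i a := by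
    intro i a b hab
    obtain ⟨t, rfl⟩ := hab
    induction t using List.reverseRecOn with
    | nil => simp
    | append_singleton t n ih =>
      rw [← List.append_assoc]
      refine subset_trans ?_ ih
      rw [hVunion i (a ++ t)]
      exact Set.subset_iUnion (fun m => V i ((a ++ t) ++ [m])) n
  -- the index function with infinite fibers
  obtain ⟨s, hs⟩ := exists_surjective_nat ι
  set e : ℕ → ι := fun n => s (Nat.unpair n).1 with he
  have hinf : ∀ i : ι, {k | e k = i}.Infinite := by
    intro i
    obtain ⟨k, hk⟩ := hs i
    apply Set.infinite_of_injective_forall_mem (f := fun m : ℕ => Nat.pair k m)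
    · intro m1 m2 hm
      simpa [Nat.pair_eq_pair] using hm
    · intro m
      simp only [Set.mem_setOf_eq, he, Nat.unpair_pair]
      exact hk
  have hcount : ∀ i : ι, Function.Surjective (Nat.count (fun k => e k = i)) :=
    fun i => Nat.surjective_count_of_infinite_setOf (hinf i)
  -- the product scheme
  set W : List ℕ → Set (∀ i, X i) :=
    fun a => {x | ∀ i, x i ∈ V i (seqAt e i a)} with hW
  have hWmem : ∀ (a : List ℕ) (x : ∀ i, X i), x ∈ W a ↔ ∀ i, x i ∈ V i (seqAt e i a) :=
    fun a x => Iff.rfl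
  have hWopen : OpenScheme W := by
    intro a
    have hrep : W a = ⋂ k ∈ Finset.range a.length,
        (fun x : ∀ i, X i => x (e k)) ⁻¹' (V (e k) (seqAt e (e k) a)) := by
      ext x
      simp only [hWmem, Set.mem_iInter, Set.mem_preimage, Finset.mem_range]
      constructor
      · intro hx k _
        exact hx (e k)
      · intro hx i
        by_cases hc : ∃ k, k < a.length ∧ e k = i
        · obtain ⟨k, hk, rfl⟩ := hc
          exact hx k hk
        · push_neg at hc
          rw [seqAt_eq_nil e i a hc, hVuniv]
          trivial
    rw [hrep]
    exact isOpen_biInter_finset fun k _ => (hVopen _ _).preimage (continuous_apply _)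
  have hWsub : ∀ (a : List ℕ) (n : ℕ), W (a ++ [n]) ⊆ W a := by
    intro a n x hx i
    refine hmono i ?_ (hx i)
    rw [seqAt_append]
    split
    · exact ⟨[n], rfl⟩
    · exact List.prefix_rfl
  have hWpart : Partitions W Set.univ := by
    refine ⟨⟨?_, ?_⟩, ?_⟩
    · ext x
      simp only [hWmem, Set.mem_univ, iff_true]
      intro i
      rw [seqAt_nil, hVuniv]
      trivial
    · intro a
      apply Set.Subset.antisymm
      · intro x hx
        have hj : x (e a.length) ∈ V (e a.length) (seqAt e (e a.length) a) := hx (e a.length)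
        rw [hVunion _ (seqAt e (e a.length) a)] at hj
        obtain ⟨_, ⟨n, rfl⟩, hn⟩ := hj
        refine Set.mem_iUnion.mpr ⟨n, ?_⟩
        intro i
        rcases eq_or_ne (e a.length) i with hi | hi
        · rw [seqAt_append, if_pos hi]
          rw [← hi]
          exact hn
        · rw [seqAt_append, if_neg hi]
          exact hx i
      · exact Set.iUnion_subset fun n => hWsub a n
    · intro a n m hnm
      ext x
      simp only [Set.mem_inter_iff, Set.mem_empty_iff_false, iff_false, not_and]
      intro hx1 hx2
      have h1 := hx1 (e a.length)
      have h2 := hx2 (e a.length)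
      rw [seqAt_append, if_pos rfl] at h1 h2
      have := hVdisj (e a.length) (seqAt e (e a.length) a) n m hnm
      exact absurd (Set.mem_inter h1 h2) (by rw [this]; exact Set.notMem_empty _)
  have hWstrict : StrictBranches W := by
    intro p
    set q : ι → ℕ → ℕ := fun i m => p (Nat.nth (fun k => e k = i) m) with hq
    have hseq : ∀ (i : ι) (n : ℕ), seqAt e i (restrictSeq p n) =
        restrictSeq (q i) (Nat.count (fun k => e k = i) n) := by
      intro i n
      rw [seqAt_restrictSeq, filter_range_eq_map_nth (fun k => e k = i)]
      rw [restrictSeq, List.map_map]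
      rfl
    choose y hy using fun i => hVstrict i (q i)
    refine ⟨fun i => y i, ?_⟩
    ext x
    simp only [fruit, Set.mem_iInter, Set.mem_singleton_iff]
    constructor
    · intro hx
      funext i
      have hxi : x i ∈ fruit (V i) (q i) := by
        simp only [fruit, Set.mem_iInter]
        intro m
        obtain ⟨n, hn⟩ := hcount i m
        have := hx n i
        rwa [hseq i n, hn] at this
      rw [hy i] at hxi
      exact hxi
    · intro hx n i
      rw [hseq i n]
      have hxi : x i ∈ fruit (V i) (q i) := by
        rw [hy i, hx]
        exact Set.mem_singleton _
      exact Set.mem_iInter.mp hxi _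
  refine ⟨W, hWopen, hWpart, hWstrict, ?_, ?_⟩
  · rintro G ⟨a, rfl⟩
    exact ⟨hWopen a, ⟨fun i => (hVne i (seqAt e i a)).some,
      fun i => (hVne i (seqAt e i a)).some_mem⟩⟩
  · intro U hU ⟨x, hxU⟩
    obtain ⟨I, u, hu, hsub⟩ := isOpen_pi_iff.mp hU x hxU
    have hb : ∀ i : ι, ∃ b : List ℕ, i ∈ I → V i b ⊆ u i := by
      intro i
      by_cases hi : i ∈ I
      · obtain ⟨G, ⟨b, rfl⟩, hG⟩ := (hVbase i).2 (u i) (hu i hi).1 ⟨x i, (hu i hi).2⟩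
        exact ⟨b, fun _ => hG⟩
      · exact ⟨[], fun hi' => absurd hi' hi⟩
    choose B hB using hb
    have hN : ∀ i : ι, ∃ n : ℕ, (B i).length ≤ Nat.count (fun k => e k = i) n := by
      intro i
      obtain ⟨n, hn⟩ := hcount i (B i).length
      exact ⟨n, hn.ge⟩
    choose N hNle using hN
    set M : ℕ := I.sup N with hM
    have hlen : ∀ i ∈ I, (B i).length ≤ Nat.count (fun k => e k = i) M := by
      intro i hi
      exact le_trans (hNle i) (Nat.count_monotone _ (Finset.le_sup hi))
    set g : ℕ → ℕ := fun k => (B (e k)).getD (Nat.count (fun k' => e k' = e k) k) 0 with hg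
    set a : List ℕ := restrictSeq g M with ha
    have hseqa : ∀ i : ι, seqAt e i a =
        (List.range (Nat.count (fun k => e k = i) M)).map (fun m => (B i).getD m 0) := by
      intro i
      rw [ha, seqAt_restrictSeq, filter_range_eq_map_nth (fun k => e k = i), List.map_map]
      apply List.map_congr_left
      intro m _
      have hmem : e (Nat.nth (fun k => e k = i) m) = i := Nat.nth_mem_of_infinite (hinf i) m
      simp only [Function.comp_apply, hg, hmem]
      rw [Nat.count_nth_of_infinite (hinf i) m]
    have hpre : ∀ i ∈ I, B i <+: seqAt e i a := by
      intro i hi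
      rw [hseqa i]
      have h2 := range_map_prefix (fun m => (B i).getD m 0) (hlen i hi)
      rwa [← eq_map_range_getD] at h2
    refine ⟨W a, ⟨a, rfl⟩, ?_⟩
    intro z hz
    apply hsub
    intro i hi
    exact hB i hi (hmono i (hpre i hi) (hz i))
end PiSpacePaper
end

section
/- Every second-countable π-space has a Lusin π-base. -/
/-!
Enumerate a countable base `B k`. The new scheme is built node by node from `V`: a node `V b`
serving `B k` is split into `V b \ V c` and the sets `V (c ++ [i])`, where `V c ⊆ B k` whenever
`V b` meets `B k` (possible because the sets `V a` form a π-base). Every point `x ∈ B k ⊆ U`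
lies in such a node, all of whose children except the first lie in `U`. The set `V b \ V c` is
partitioned by the countably many nodes of `V` hanging off the path from `b` to `c`, so each
branch of the new scheme follows a branch of `V` and has the same fruit.
-/

open Set Topology

namespace PiSpacePaper

theorem restrictSeq_prefix_restrictSeq (p : ℕ → ℕ) {m n : ℕ} (h : m ≤ n) :
    restrictSeq p m <+: restrictSeq p n := by
  rw [List.prefix_iff_eq_take]
  simp [restrictSeq, ← List.map_take, List.take_range, h]

theorem prefix_of_chain {l : ℕ → List ℕ} (hl : ∀ n, l n <+: l (n + 1)) {m n : ℕ}
    (h : m ≤ n) : l m <+: l n := by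
  induction n, h using Nat.le_induction with
  | base => exact List.prefix_refl _
  | succ n _ ih => exact ih.trans (hl n)

theorem exists_restrictSeq_eq_of_chain {l : ℕ → List ℕ} (hl : ∀ n, l n <+: l (n + 1))
    (hlen : ∀ m, ∃ n, m ≤ (l n).length) :
    ∃ p : ℕ → ℕ, ∀ n, restrictSeq p (l n).length = l n := by
  choose N hN using fun j => hlen (j + 1)
  refine ⟨fun j => (l (N j)).getD j 0, fun n => List.ext_getElem (by simp [restrictSeq]) ?_⟩
  intro i hi hin
  have hiN : i < (l (N i)).length := hN i
  simp only [restrictSeq, List.getElem_map, List.getElem_range, List.getD_eq_getElem _ _ hiN]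
  rcases le_total n (N i) with h | h
  · exact ((prefix_of_chain hl h).getElem hin).symm
  · exact (prefix_of_chain hl h).getElem hiN

/-- The nodes hanging off the path from `b` to `b ++ d`. -/
def offPath (b : List ℕ) : List ℕ → Set (List ℕ)
  | [] => ∅
  | t :: d => (fun m => b ++ [m]) '' {t}ᶜ ∪ offPath (b ++ [t]) d

theorem prefix_and_length_lt_of_mem_offPath {b d c : List ℕ} (hc : c ∈ offPath b d) :
    b <+: c ∧ b.length < c.length := by
  induction d generalizing b with
  | nil => exact absurd hc (notMem_empty c)
  | cons t d ih =>
    rcases hc with ⟨m, -, rfl⟩ | hc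
    · exact ⟨⟨[m], rfl⟩, by simp⟩
    · obtain ⟨hpre, hlen⟩ := ih hc
      exact ⟨(List.prefix_append b [t]).trans hpre, by simp at hlen; omega⟩

theorem offPath_infinite (b : List ℕ) {d : List ℕ} (hd : d ≠ []) : (offPath b d).Infinite := by
  obtain ⟨t, d, rfl⟩ := List.exists_cons_of_ne_nil hd
  refine Set.Infinite.mono subset_union_left ?_
  exact (finite_singleton t).infinite_compl.image fun m _ n _ h => by simpa using h

noncomputable def offPathEquiv (b : List ℕ) {d : List ℕ} (hd : d ≠ []) : ℕ ≃ offPath b d :=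
  haveI := (offPath_infinite b hd).to_subtype
  nonempty_equiv_of_countable.some

section Schemes

variable {X : Type*} {V : List ℕ → Set X} {s : Set X}

theorem Covers.subset_of_prefix (hV : Covers V s) {a b : List ℕ} (h : a <+: b) :
    V b ⊆ V a := by
  obtain ⟨t, rfl⟩ := h
  induction t using List.reverseRecOn with
  | nil => simp
  | append_singleton t n ih =>
    rw [← List.append_assoc]
    exact (subset_iUnion (fun m => V (a ++ t ++ [m])) n).trans (hV.2 _).ge |>.trans ih

theorem Covers.exists_fruit_eq_iInter (hV : Covers V s) {l : ℕ → List ℕ}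
    (hl : ∀ n, l n <+: l (n + 1)) (hlen : ∀ m, ∃ n, m ≤ (l n).length) :
    ∃ p : ℕ → ℕ, fruit V p = ⋂ n, V (l n) := by
  obtain ⟨p, hp⟩ := exists_restrictSeq_eq_of_chain hl hlen
  refine ⟨p, Subset.antisymm ?_ ?_⟩
  · exact subset_iInter fun n => hp n ▸ iInter_subset _ _
  · refine subset_iInter fun j => ?_
    obtain ⟨n, hn⟩ := hlen j
    refine (iInter_subset _ n).trans (hV.subset_of_prefix ?_)
    exact hp n ▸ restrictSeq_prefix_restrictSeq p hn

theorem Partitions.disjoint (hV : Partitions V s) (a : List ℕ) {n m : ℕ} (h : n ≠ m) :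
    Disjoint (V (a ++ [n])) (V (a ++ [m])) :=
  disjoint_iff_inter_eq_empty.2 (hV.2 a n m h)

theorem Partitions.prefix_or_prefix (hV : Partitions V s) {a b : List ℕ}
    (h : (V a ∩ V b).Nonempty) : a <+: b ∨ b <+: a := by
  induction a generalizing b V s with
  | nil => exact Or.inl List.nil_prefix
  | cons x a ih =>
    cases b with
    | nil => exact Or.inr List.nil_prefix
    | cons y b =>
      obtain ⟨z, hza, hzb⟩ := h
      obtain rfl : x = y := by
        by_contra hxy
        exact (hV.disjoint [] hxy).ne_of_mem (hV.1.subset_of_prefix ⟨a, rfl⟩ hza)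
          (hV.1.subset_of_prefix ⟨b, rfl⟩ hzb) rfl
      -- the subtree below `[x]` is again a partitioning scheme
      have hVx : Partitions (fun l => V (x :: l)) (V [x]) :=
        ⟨⟨rfl, fun l => hV.1.2 (x :: l)⟩, fun l => hV.2 (x :: l)⟩
      simpa only [List.cons_prefix_cons, true_and] using ih hVx ⟨z, hza, hzb⟩

theorem Partitions.iUnion_ne (hV : Partitions V s) (a : List ℕ) (t : ℕ) :
    ⋃ m ∈ ({t}ᶜ : Set ℕ), V (a ++ [m]) = V a \ V (a ++ [t]) := by
  ext x
  simp only [mem_iUnion, mem_compl_singleton_iff, mem_sdiff, exists_prop]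
  constructor
  · rintro ⟨m, hmt, hxm⟩
    exact ⟨hV.1.subset_of_prefix ⟨[m], rfl⟩ hxm,
      fun hxt => (hV.disjoint a hmt).ne_of_mem hxm hxt rfl⟩
  · rintro ⟨hxa, hxt⟩
    rw [hV.1.2 a, mem_iUnion] at hxa
    obtain ⟨m, hxm⟩ := hxa
    exact ⟨m, fun hmt => hxt (hmt ▸ hxm), hxm⟩

theorem Partitions.biUnion_offPath (hV : Partitions V s) (b d : List ℕ) :
    ⋃ c ∈ offPath b d, V c = V b \ V (b ++ d) := by
  induction d generalizing b with
  | nil => simp [offPath]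
  | cons t d ih =>
    rw [offPath, biUnion_union, biUnion_image, hV.iUnion_ne, ih,
      show b ++ t :: d = b ++ [t] ++ d by simp]
    exact Set.sdiff_union_sdiff_cancel (hV.1.subset_of_prefix ⟨[t], rfl⟩)
      (hV.1.subset_of_prefix ⟨d, rfl⟩)

theorem Partitions.pairwiseDisjoint_offPath (hV : Partitions V s) (b d : List ℕ) :
    (offPath b d).PairwiseDisjoint V := by
  induction d generalizing b with
  | nil => exact pairwiseDisjoint_empty
  | cons t d ih =>
    refine pairwiseDisjoint_union.2 ⟨?_, ih _, ?_⟩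
    · rintro _ ⟨m, -, rfl⟩ _ ⟨n, -, rfl⟩ hmn
      exact hV.disjoint b fun h => hmn (h ▸ rfl)
    · rintro _ ⟨m, hmt, rfl⟩ c hc -
      exact (hV.disjoint b hmt).mono_right
        (hV.1.subset_of_prefix (prefix_and_length_lt_of_mem_offPath hc).1)

theorem Partitions.exists_ne_nil_subset_of_isPiBase [TopologicalSpace X] (hV : Partitions V s)
    (hVo : OpenScheme V) (hbase : IsPiBase {S : Set X | ∃ a : List ℕ, S = V a}) {U : Set X}
    (hU : IsOpen U) (b : List ℕ) : ∃ e ≠ [], (U ∩ V b).Nonempty → V (b ++ e) ⊆ U := by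
  by_cases hUb : (U ∩ V b).Nonempty
  · obtain ⟨_, ⟨c, rfl⟩, hc⟩ := hbase.2 _ (hU.inter (hVo b)) hUb
    obtain ⟨x, hx⟩ := (hbase.1 _ ⟨c, rfl⟩).2
    obtain hcb | ⟨d, rfl⟩ := hV.prefix_or_prefix ⟨x, hx, (hc hx).2⟩
    · exact ⟨[0], by simp, fun _ y hy =>
        (hc (hV.1.subset_of_prefix (hcb.trans ⟨[0], rfl⟩) hy)).1⟩
    · exact ⟨d ++ [0], by simp, fun _ y hy =>
        (hc (hV.1.subset_of_prefix ⟨[0], by simp⟩ hy)).1⟩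
  · exact ⟨[0], by simp, fun h => absurd h hUb⟩

end Schemes

/-- A node of the refined scheme: `whole b k` stands for `V b` and `rest b k` for
`V b \ V (b ++ ext b k)`; `k` is the index of the next basic open set to be served. -/
inductive Node
  | whole (b : List ℕ) (k : ℕ)
  | rest (b : List ℕ) (k : ℕ)

namespace Node

def base : Node → List ℕ
  | whole b _ => b
  | rest b _ => b

def rank : Node → ℕ
  | whole b _ => 2 * b.length
  | rest b _ => 2 * b.length + 1

variable {X : Type*} (V : List ℕ → Set X) {ext : List ℕ → ℕ → List ℕ}

def carrier (ext : List ℕ → ℕ → List ℕ) : Node → Set X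
  | whole b _ => V b
  | rest b k => V b \ V (b ++ ext b k)

noncomputable def step (hext : ∀ b k, ext b k ≠ []) : Node → ℕ → Node
  | whole b k, 0 => rest b k
  | whole b k, i + 1 => whole (b ++ ext b k ++ [i]) (k + 1)
  | rest b k, i => whole (offPathEquiv b (hext b k) i) (k + 1)

variable (hext : ∀ b k, ext b k ≠ [])

theorem base_prefix_step (n : Node) (i : ℕ) : n.base <+: (n.step hext i).base := by
  match n, i with
  | whole b k, 0 => exact List.prefix_refl b
  | whole b k, i + 1 => exact ⟨ext b k ++ [i], by simp [step, base]⟩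
  | rest b k, i =>
    exact (prefix_and_length_lt_of_mem_offPath (offPathEquiv b (hext b k) i).2).1

theorem rank_lt_step (n : Node) (i : ℕ) : n.rank < (n.step hext i).rank := by
  match n, i with
  | whole b k, 0 => simp [step, rank]
  | whole b k, i + 1 => simp [step, rank]
  | rest b k, i =>
    have := (prefix_and_length_lt_of_mem_offPath (offPathEquiv b (hext b k) i).2).2
    simp only [step, rank]; omega

theorem carrier_subset_base (n : Node) : n.carrier V ext ⊆ V n.base := by
  cases n with
  | whole b k => exact subset_rfl
  | rest b k => exact sdiff_subset

variable {V} {s : Set X} (hV : Partitions V s)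
include hV

theorem base_step_subset_carrier (n : Node) (i : ℕ) :
    V (n.step hext i).base ⊆ n.carrier V ext := by
  match n, i with
  | whole b k, 0 => exact subset_rfl
  | whole b k, i + 1 => exact hV.1.subset_of_prefix ⟨ext b k ++ [i], by simp [step, base]⟩
  | rest b k, i =>
    rw [carrier, ← hV.biUnion_offPath]
    exact subset_biUnion_of_mem (u := V) (offPathEquiv b (hext b k) i).2

theorem carrier_eq_iUnion (n : Node) :
    n.carrier V ext = ⋃ i, (n.step hext i).carrier V ext := by
  cases n with
  | whole b k =>
    rw [← union_iUnion_nat_succ]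
    simp only [step, carrier]
    rw [← hV.1.2, sdiff_union_of_subset (hV.1.subset_of_prefix ⟨ext b k, rfl⟩)]
  | rest b k =>
    simp only [step, carrier]
    rw [← hV.biUnion_offPath, biUnion_eq_iUnion]
    exact ((offPathEquiv b (hext b k)).iSup_comp (g := fun c => V c.1)).symm

theorem pairwise_disjoint_carrier_step (n : Node) :
    Pairwise fun i j =>
      Disjoint ((n.step hext i).carrier V ext) ((n.step hext j).carrier V ext) := by
  intro i j hij
  match n, i, j with
  | whole b k, 0, 0 => exact absurd rfl hij
  | whole b k, 0, j + 1 =>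
    exact disjoint_sdiff_left.mono_right (hV.1.subset_of_prefix ⟨[j], rfl⟩)
  | whole b k, i + 1, 0 =>
    exact disjoint_sdiff_left.mono_right (hV.1.subset_of_prefix ⟨[i], rfl⟩) |>.symm
  | whole b k, i + 1, j + 1 => exact hV.disjoint _ fun h => hij (by rw [h])
  | rest b k, i, j =>
    exact hV.pairwiseDisjoint_offPath b (ext b k) (offPathEquiv b (hext b k) i).2
      (offPathEquiv b (hext b k) j).2
      fun h => hij ((offPathEquiv b (hext b k)).injective (Subtype.ext h))

theorem isOpen_carrier [TopologicalSpace X] (hVo : OpenScheme V) (n : Node) :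
    IsOpen (n.carrier V ext) := by
  cases n with
  | whole b k => exact hVo b
  | rest b k =>
    rw [carrier, ← hV.biUnion_offPath]
    exact isOpen_biUnion fun c _ => hVo c

end Node

section Refinement

variable {X : Type*} {V : List ℕ → Set X} {ext : List ℕ → ℕ → List ℕ}

noncomputable def refinedNode (hext : ∀ b k, ext b k ≠ []) (a : List ℕ) : Node :=
  a.foldl (Node.step hext) (.whole [] 0)

def refinedScheme (V : List ℕ → Set X) (hext : ∀ b k, ext b k ≠ []) (a : List ℕ) : Set X :=
  (refinedNode hext a).carrier V ext

variable (hext : ∀ b k, ext b k ≠ [])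

theorem refinedNode_append (a : List ℕ) (i : ℕ) :
    refinedNode hext (a ++ [i]) = (refinedNode hext a).step hext i := by
  simp [refinedNode]

variable {s : Set X} (hV : Partitions V s)
include hV

theorem partitions_refinedScheme : Partitions (refinedScheme V hext) s := by
  refine ⟨⟨hV.1.1, fun a => ?_⟩, fun a n m hnm => ?_⟩
  · simp only [refinedScheme, refinedNode_append]
    exact Node.carrier_eq_iUnion hext hV _
  · simp only [refinedScheme, refinedNode_append]
    exact disjoint_iff_inter_eq_empty.1 (Node.pairwise_disjoint_carrier_step hext hV _ hnm)

theorem isOpen_refinedScheme [TopologicalSpace X] (hVo : OpenScheme V) :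
    OpenScheme (refinedScheme V hext) :=
  fun _ => Node.isOpen_carrier hV hVo _

/-- Every fruit of the refined scheme is a fruit of `V`: along a branch the bases of the
nodes form a chain whose length grows at least every other step. -/
theorem strictBranches_refinedScheme (hstr : StrictBranches V) :
    StrictBranches (refinedScheme V hext) := by
  intro p
  set σ : ℕ → Node := fun n => refinedNode hext (restrictSeq p n)
  have hσ : ∀ n, σ (n + 1) = (σ n).step hext (p n) := fun n => by
    simp only [σ, restrictSeq, List.range_succ, List.map_append, List.map_singleton,
      refinedNode_append]
  have hrank : ∀ n, n ≤ (σ n).rank := fun n => by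
    induction n with
    | zero => exact Nat.zero_le _
    | succ n ih => exact hσ n ▸ (ih.trans_lt (Node.rank_lt_step hext _ _))
  have hchain : ∀ n, (σ n).base <+: (σ (n + 1)).base := fun n =>
    hσ n ▸ Node.base_prefix_step hext _ _
  have hlen : ∀ m, ∃ n, m ≤ (σ n).base.length := fun m => ⟨2 * m, by
    have := hrank (2 * m)
    cases h : σ (2 * m) <;> simp only [h, Node.rank, Node.base] at this ⊢ <;> omega⟩
  obtain ⟨q, hq⟩ := hV.1.exists_fruit_eq_iInter hchain hlen
  obtain ⟨x, hx⟩ := hstr q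
  refine ⟨x, hx ▸ hq ▸ Subset.antisymm ?_ ?_⟩
  · exact iInter_mono fun n => Node.carrier_subset_base V (σ n)
  · refine subset_iInter fun n => (iInter_subset _ (n + 1)).trans ?_
    exact hσ n ▸ Node.base_step_subset_carrier hext hV (σ n) (p n)

theorem exists_refinedNode_eq_whole {x : X} (hx : x ∈ s) (k : ℕ) :
    ∃ a b, refinedNode hext a = .whole b k ∧ x ∈ V b := by
  induction k with
  | zero => exact ⟨[], [], rfl, hV.1.1 ▸ hx⟩
  | succ k ih =>
    obtain ⟨a, b, ha, hxb⟩ := ih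
    have hmem : ∀ n : Node, x ∈ n.carrier V ext → ∃ i, x ∈ (n.step hext i).carrier V ext :=
      fun n hxn => mem_iUnion.1 (Node.carrier_eq_iUnion hext hV n ▸ hxn)
    obtain ⟨i, hi⟩ := hmem _ (show x ∈ (Node.whole b k).carrier V ext from hxb)
    cases i with
    | succ i => exact ⟨a ++ [i + 1], _, by rw [refinedNode_append, ha]; rfl, hi⟩
    | zero =>
      obtain ⟨j, hj⟩ := hmem _ hi
      exact ⟨a ++ [0] ++ [j], _, by rw [refinedNode_append, refinedNode_append, ha]; rfl, hj⟩

theorem exists_refinedScheme_tail_subset {x : X} (hx : x ∈ s) (k : ℕ) :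
    ∃ a b, x ∈ refinedScheme V hext a ∧ x ∈ V b ∧
      ∀ i, refinedScheme V hext (a ++ [i + 1]) ⊆ V (b ++ ext b k) := by
  obtain ⟨a, b, ha, hxb⟩ := exists_refinedNode_eq_whole hext hV hx k
  refine ⟨a, b, by rwa [refinedScheme, ha], hxb, fun i => ?_⟩
  rw [refinedScheme, refinedNode_append, ha]
  exact hV.1.subset_of_prefix ⟨[i], rfl⟩

end Refinement

/-- Every second-countable π-space has a Lusin π-base. -/
theorem statement4 {X : Type} [TopologicalSpace X] [SecondCountableTopology X]
    (h : IsPiSpace X) :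
    ∃ V : List ℕ → Set X, IsLusinPiBase V := by
  obtain ⟨V, hVo, hV, hstr, hbase⟩ := h
  obtain ⟨B, hB⟩ := TopologicalSpace.exists_seq_basis X
  choose ext hext hext_sub using fun b k =>
    hV.exists_ne_nil_subset_of_isPiBase hVo hbase (hB.isOpen ⟨k, rfl⟩) b
  refine ⟨refinedScheme V hext, isOpen_refinedScheme hext hV hVo,
    partitions_refinedScheme hext hV, strictBranches_refinedScheme hext hV hstr, ?_⟩
  intro x U hU hxU
  obtain ⟨_, ⟨k, rfl⟩, hxk, hkU⟩ := hB.exists_subset_of_mem_open hxU hU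
  obtain ⟨a, b, hxa, hxb, htail⟩ := exists_refinedScheme_tail_subset hext hV (mem_univ x) k
  refine ⟨a, 1, hxa, iUnion₂_subset fun i hi => ?_⟩
  obtain ⟨j, rfl⟩ := Nat.exists_eq_add_of_le' hi
  exact (htail j).trans ((hext_sub b k ⟨x, hxk, hxb⟩).trans hkU)
end PiSpacePaper
end

section
/- Let N be the family of nowhere dense subsets of the Baire space ℕ^ℕ, and let τ_N be the topology on ℕ^ℕ generated by the family {U \ A : U open in the Baire space, A ∈ N}. Then there is no continuous open surjection from (ℕ^ℕ, τ_N) onto the Baire space. -/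
open Set Topology

namespace PiSpacePaper

section Statement7Aux

open TopologicalSpace Filter

/-- The union of two nowhere dense sets is nowhere dense. -/
lemma nwd_union {α : Type*} [TopologicalSpace α] {s t : Set α}
    (hs : IsNowhereDense s) (ht : IsNowhereDense t) : IsNowhereDense (s ∪ t) := by
  unfold IsNowhereDense at *
  rw [closure_union, interior_union_isClosed_of_interior_empty isClosed_closure ht]
  exact hs

/-- The union of two meagre sets is meagre. -/
lemma meagre_union {α : Type*} [TopologicalSpace α] {s t : Set α}
    (hs : IsMeagre s) (ht : IsMeagre t) : IsMeagre (s ∪ t) := by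
  rw [IsMeagre, Set.compl_union]
  exact Filter.inter_mem hs ht

/-- A nowhere dense set is meagre. -/
lemma nwd_isMeagre {α : Type*} [TopologicalSpace α] {s : Set α}
    (hs : IsNowhereDense s) : IsMeagre s := by
  rw [isMeagre_iff_countable_union_isNowhereDense]
  exact ⟨{s}, by simpa using hs, Set.countable_singleton s, by simp⟩

/-- Standard-open sets are `tauN`-open. -/
lemma tauN_isOpen_of_isOpen {U : Set (ℕ → ℕ)} (hU : IsOpen U) : IsOpen[tauN] U := by
  have h : U = U \ ∅ := by simp
  rw [h]
  exact TopologicalSpace.GenerateOpen.basic _ ⟨U, ∅, hU, isNowhereDense_empty, rfl⟩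

/-- Every point of a `tauN`-open set has a basic neighborhood `U \ A` inside it. -/
lemma tauN_mem_basic_aux {W : Set (ℕ → ℕ)}
    (h : TopologicalSpace.GenerateOpen
      {S | ∃ U A : Set (ℕ → ℕ), IsOpen U ∧ IsNowhereDense A ∧ S = U \ A} W) :
    ∀ x ∈ W, ∃ U A : Set (ℕ → ℕ),
      IsOpen U ∧ IsNowhereDense A ∧ x ∈ U ∧ x ∉ A ∧ U \ A ⊆ W := by
  induction h with
  | basic S hS =>
    obtain ⟨U, A, hU, hA, rfl⟩ := hS
    exact fun x hx => ⟨U, A, hU, hA, hx.1, hx.2, subset_rfl⟩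
  | univ =>
    exact fun x _ => ⟨Set.univ, ∅, isOpen_univ, isNowhereDense_empty, trivial,
      Set.notMem_empty x, by simp⟩
  | inter S T hS hT ihS ihT =>
    intro x hx
    obtain ⟨U1, A1, hU1, hA1, hxU1, hxA1, h1⟩ := ihS x hx.1
    obtain ⟨U2, A2, hU2, hA2, hxU2, hxA2, h2⟩ := ihT x hx.2
    refine ⟨U1 ∩ U2, A1 ∪ A2, hU1.inter hU2, nwd_union hA1 hA2, ⟨hxU1, hxU2⟩, ?_, ?_⟩
    · intro h; rcases h with h | h; exact hxA1 h; exact hxA2 h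
    · intro z hz
      exact ⟨h1 ⟨hz.1.1, fun h => hz.2 (Or.inl h)⟩, h2 ⟨hz.1.2, fun h => hz.2 (Or.inr h)⟩⟩
  | sUnion S hS ih =>
    rintro x ⟨T, hT, hxT⟩
    obtain ⟨U, A, hU, hA, hxU, hxA, hsub⟩ := ih T hT x hxT
    exact ⟨U, A, hU, hA, hxU, hxA, hsub.trans (Set.subset_sUnion_of_mem hT)⟩

lemma tauN_mem_basic {W : Set (ℕ → ℕ)} (hW : IsOpen[tauN] W) :
    ∀ x ∈ W, ∃ U A : Set (ℕ → ℕ),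
      IsOpen U ∧ IsNowhereDense A ∧ x ∈ U ∧ x ∉ A ∧ U \ A ⊆ W :=
  tauN_mem_basic_aux hW

/-- Rigidity: a `tauN`-closed set that is (standard-)dense in an open set contains it. -/
lemma tauN_closed_rigid {F G : Set (ℕ → ℕ)} (hF : IsClosed[tauN] F) (hG : IsOpen G)
    (hsub : G ⊆ closure F) : G ⊆ F := by
  intro x hxG
  by_contra hxF
  have hWopen : IsOpen[tauN] Fᶜ := @IsClosed.isOpen_compl _ tauN F hF
  obtain ⟨U, A, hU, hA, hxU, hxA, hUA⟩ := tauN_mem_basic hWopen x hxF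
  have hFU : F ∩ U ⊆ A := by
    intro z hz
    by_contra hzA
    exact (hUA ⟨hz.2, hzA⟩ : z ∈ Fᶜ) hz.1
  have hclA : U ∩ G ⊆ closure A := by
    intro z hz
    rw [mem_closure_iff]
    intro O hO hzO
    have hz' : z ∈ closure F := hsub hz.2
    rw [mem_closure_iff] at hz'
    obtain ⟨w, hw⟩ := hz' (O ∩ U) (hO.inter hU) ⟨hzO, hz.1⟩
    exact ⟨w, hw.1.1, hFU ⟨hw.2, hw.1.2⟩⟩
  have : (interior (closure A)).Nonempty :=
    ⟨x, interior_maximal hclA (hU.inter hG) ⟨hxU, hxG⟩⟩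
  rw [hA] at this
  exact Set.not_nonempty_empty this

/-- The complement of a singleton is dense in the Baire space. -/
lemma dense_compl_singleton' (y : ℕ → ℕ) : Dense ({y}ᶜ : Set (ℕ → ℕ)) := by
  rw [dense_iff_inter_open]
  intro U hU ⟨p, hp⟩
  by_cases hpy : p = y
  · subst hpy
    obtain ⟨I, u, h1, h2⟩ := isOpen_pi_iff.mp hU p hp
    set m : ℕ := (I.sup id) + 1 with hm
    have hmI : m ∉ I := by
      intro h
      have := Finset.le_sup (f := id) h
      simp only [id] at this
      omega
    refine ⟨fun i => if i ∈ I then p i else p i + 1, ?_, ?_⟩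
    · refine h2 ?_
      rw [Set.mem_pi]
      intro a ha
      have haI : a ∈ I := ha
      simp only [if_pos haI]
      exact (h1 a haI).2
    · intro hmem
      have heq : (fun i => if i ∈ I then p i else p i + 1) = p := hmem
      have hcf := congrFun heq m
      simp only [if_neg hmI] at hcf
      omega
  · exact ⟨p, hp, by simpa using hpy⟩

/-- Singletons are nowhere dense in the Baire space. -/
lemma nwd_singleton (y : ℕ → ℕ) : IsNowhereDense ({y} : Set (ℕ → ℕ)) := by
  rw [IsNowhereDense, closure_singleton, interior_eq_empty_iff_dense_compl]
  exact dense_compl_singleton' y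

/-- Countable subsets of the Baire space are meagre. -/
lemma countable_isMeagre {s : Set (ℕ → ℕ)} (hs : s.Countable) : IsMeagre s := by
  rw [isMeagre_iff_countable_union_isNowhereDense]
  refine ⟨(fun y => ({y} : Set (ℕ → ℕ))) '' s, ?_, hs.image _, ?_⟩
  · rintro t ⟨y, _, rfl⟩; exact nwd_singleton y
  · intro z hz
    exact ⟨{z}, ⟨z, hz, rfl⟩, rfl⟩

/-- A nonempty open subset of the Baire space is not meagre. -/
lemma not_isMeagre_open {O : Set (ℕ → ℕ)} (hO : IsOpen O) (hne : O.Nonempty) :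
    ¬ IsMeagre O := by
  intro h
  obtain ⟨z, hz1, hz2⟩ := (dense_of_mem_residual h).inter_open_nonempty O hO hne
  exact hz2 hz1

end Statement7Aux

/-- There is no continuous open surjection from (ℕ^ℕ, τ_N) onto the Baire


space. -/
theorem statement7 :
    ¬ ∃ f : (ℕ → ℕ) → (ℕ → ℕ),
      Continuous[tauN, Pi.topologicalSpace] f ∧
      (@IsOpenMap (ℕ → ℕ) (ℕ → ℕ) tauN Pi.topologicalSpace f) ∧
      Function.Surjective f := by
  rintro ⟨f, hc, ho, hs⟩
  classical
  have hcont : ∀ {V : Set (ℕ → ℕ)}, IsOpen V → IsOpen[tauN] (f ⁻¹' V) := by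
    intro V hV
    exact continuous_def.mp hc V hV
  obtain ⟨b, hbc, hbne, hb⟩ := TopologicalSpace.exists_countable_basis (ℕ → ℕ)
  have hbne' : ∀ {C : Set (ℕ → ℕ)}, C ∈ b → C.Nonempty := by
    intro C hC
    exact Set.nonempty_iff_ne_empty.mpr (fun h => hbne (h ▸ hC))
  -- fibers are tauN-closed
  have hfib_closed : ∀ y : ℕ → ℕ, IsClosed[tauN] (f ⁻¹' {y}) := by
    intro y
    have h1 : IsOpen[tauN] ((f ⁻¹' {y})ᶜ) := by
      rw [← Set.preimage_compl]
      exact hcont (isOpen_compl_iff.mpr isClosed_singleton)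
    exact @IsClosed.mk _ tauN _ h1
  -- images of standard-open sets are open
  have himg : ∀ {U : Set (ℕ → ℕ)}, IsOpen U → IsOpen (f '' U) :=
    fun hU => ho _ (tauN_isOpen_of_isOpen hU)
  -- the canonical open hull of a preimage
  set UV : Set (ℕ → ℕ) → Set (ℕ → ℕ) := fun V =>
    ⋃₀ {U | IsOpen U ∧ ∃ A, IsNowhereDense A ∧ U \ A ⊆ f ⁻¹' V} with hUVdef
  have hUVopen : ∀ V, IsOpen (UV V) := fun V => isOpen_sUnion (fun U hU => hU.1)
  have hUVsub : ∀ {V}, IsOpen V → f ⁻¹' V ⊆ UV V := by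
    intro V hV x hx
    obtain ⟨U, A, hU, hA, hxU, hxA, hsub⟩ :=
      tauN_mem_basic (hcont hV) x hx
    exact ⟨U, ⟨hU, A, hA, hsub⟩, hxU⟩
  have hUVmeagre : ∀ V, IsMeagre (UV V \ f ⁻¹' V) := by
    intro V
    obtain ⟨T, hTc, hTsub, hTeq⟩ :=
      TopologicalSpace.isOpen_sUnion_countable {U | IsOpen U ∧ ∃ A, IsNowhereDense A ∧ U \ A ⊆ f ⁻¹' V}
        (fun U hU => hU.1)
    have hch : ∀ U ∈ T, ∃ A, IsNowhereDense A ∧ U \ A ⊆ f ⁻¹' V := fun U hU => (hTsub hU).2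
    choose! g hg1 hg2 using hch
    rw [isMeagre_iff_countable_union_isNowhereDense]
    refine ⟨g '' T, ?_, hTc.image _, ?_⟩
    · rintro t ⟨U, hU, rfl⟩; exact hg1 U hU
    · intro z hz
      have hz1 : z ∈ ⋃₀ T := by rw [hTeq]; exact hz.1
      obtain ⟨U, hUT, hzU⟩ := hz1
      refine ⟨g U, ⟨U, hUT, rfl⟩, ?_⟩
      by_contra hzg
      exact hz.2 (hg2 U hUT ⟨hzU, hzg⟩)
  -- the countable exceptional set of points with non-nowhere-dense fibers
  set E : Set (ℕ → ℕ) := {y | ∃ C ∈ b, C ⊆ f ⁻¹' {y}} with hEdef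
  have hEc : E.Countable := by
    have hsub : E ⊆ ⋃ C ∈ b, {y | C ⊆ f ⁻¹' {y}} := by
      rintro y ⟨C, hC, hss⟩
      exact Set.mem_biUnion hC hss
    refine Set.Countable.mono hsub (Set.Countable.biUnion hbc ?_)
    intro C hC
    apply Set.Subsingleton.countable
    intro y1 h1 y2 h2
    obtain ⟨c, hcC⟩ := hbne' hC
    have e1 : f c = y1 := h1 hcC
    have e2 : f c = y2 := h2 hcC
    rw [← e1, ← e2]
  have hfib_nwd : ∀ y ∉ E, IsNowhereDense (f ⁻¹' {y}) := by
    intro y hyE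
    rw [IsNowhereDense]
    by_contra h
    obtain ⟨x, hx⟩ := Set.nonempty_iff_ne_empty.mpr h
    obtain ⟨C, hCb, hxC, hCsub⟩ := hb.exists_subset_of_mem_open hx isOpen_interior
    have hCfib : C ⊆ f ⁻¹' {y} :=
      tauN_closed_rigid (hfib_closed y) (hb.isOpen hCb) (hCsub.trans interior_subset)
    exact hyE ⟨C, hCb, hCfib⟩
  -- the "bad" sets
  set Bad : Set (ℕ → ℕ) → Set (ℕ → ℕ) := fun C =>
    ⋂₀ ((fun C' => closure (f '' C')) '' {C' | C' ∈ b ∧ C' ⊆ C}) with hBaddef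
  have hBadclosed : ∀ C, IsClosed (Bad C) := by
    intro C
    apply isClosed_sInter
    rintro t ⟨C', _, rfl⟩
    exact isClosed_closure
  have hBadnwd : ∀ C ∈ b, IsNowhereDense (Bad C) := by
    intro C hCb
    rw [(hBadclosed C).isNowhereDense_iff]
    by_contra h
    obtain ⟨x, hx⟩ := Set.nonempty_iff_ne_empty.mpr h
    obtain ⟨V₀, hV₀b, hxV₀, hV₀sub⟩ := hb.exists_subset_of_mem_open hx isOpen_interior
    have hV₀Bad : V₀ ⊆ Bad C := hV₀sub.trans interior_subset
    have hV₀open : IsOpen V₀ := hb.isOpen hV₀b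
    have hV₀ne : V₀.Nonempty := ⟨x, hxV₀⟩
    set 𝒪 : Set (Set (ℕ → ℕ)) :=
      (fun C' => f '' C' ∪ (closure V₀)ᶜ) '' {C' | C' ∈ b ∧ C' ⊆ C} with h𝒪def
    have h𝒪c : 𝒪.Countable := (hbc.mono (fun _ h => h.1)).image _
    have h𝒪open : ∀ O' ∈ 𝒪, IsOpen O' := by
      rintro O' ⟨C', ⟨hC'b, _⟩, rfl⟩
      exact (himg (hb.isOpen hC'b)).union isClosed_closure.isOpen_compl
    have h𝒪dense : ∀ O' ∈ 𝒪, Dense O' := by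
      rintro O' ⟨C', ⟨hC'b, hC'C⟩, rfl⟩
      rw [dense_iff_inter_open]
      intro O hO hOne
      by_cases hcase : (O ∩ (closure V₀)ᶜ).Nonempty
      · obtain ⟨z, hz⟩ := hcase
        exact ⟨z, hz.1, Or.inr hz.2⟩
      · have hOsub : O ⊆ closure V₀ := by
          intro z hz
          by_contra hzc
          exact hcase ⟨z, hz, hzc⟩
        obtain ⟨o, hoO⟩ := hOne
        have ho' : o ∈ closure V₀ := hOsub hoO
        rw [mem_closure_iff] at ho'
        obtain ⟨w, hwO, hwV⟩ := ho' O hO hoO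
        have hmem2 : closure (f '' C') ∈
            (fun C' => closure (f '' C')) '' {C' | C' ∈ b ∧ C' ⊆ C} :=
          ⟨C', ⟨hC'b, hC'C⟩, rfl⟩
        have hwcl : w ∈ closure (f '' C') :=
          Set.sInter_subset_of_mem hmem2 (hV₀Bad hwV)
        rw [mem_closure_iff] at hwcl
        obtain ⟨v, hv⟩ := hwcl (O ∩ V₀) (hO.inter hV₀open) ⟨hwO, hwV⟩
        exact ⟨v, hv.1.1, Or.inl hv.2⟩
    have hD : Dense (⋂₀ 𝒪) := dense_sInter_of_isOpen h𝒪open h𝒪c h𝒪dense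
    -- any point of V₀ ∩ ⋂₀ 𝒪 has fiber containing C
    have hfd : ∀ y, y ∈ V₀ → y ∈ ⋂₀ 𝒪 → C ⊆ f ⁻¹' {y} := by
      intro y hyV hyI
      have hmeet : ∀ C' ∈ b, C' ⊆ C → (f ⁻¹' {y} ∩ C').Nonempty := by
        intro C' hC'b hC'C
        have hmem : y ∈ f '' C' ∪ (closure V₀)ᶜ := hyI _ ⟨C', ⟨hC'b, hC'C⟩, rfl⟩
        rcases hmem with h | h
        · obtain ⟨z, hzC', hfz⟩ := h
          exact ⟨z, by simp [hfz], hzC'⟩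
        · exact absurd (subset_closure hyV) h
      have hCcl : C ⊆ closure (f ⁻¹' {y}) := by
        intro c hcC
        rw [hb.mem_closure_iff]
        intro o hob hco
        obtain ⟨C', hC'b, hcC', hC'sub⟩ :=
          hb.exists_subset_of_mem_open (show c ∈ o ∩ C from ⟨hco, hcC⟩)
            ((hb.isOpen hob).inter (hb.isOpen hCb))
        obtain ⟨z, hz1, hz2⟩ := hmeet C' hC'b (hC'sub.trans Set.inter_subset_right)
        exact ⟨z, (hC'sub hz2).1, hz1⟩
      exact tauN_closed_rigid (hfib_closed y) (hb.isOpen hCb) hCcl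
    obtain ⟨y₁, hy₁V, hy₁D⟩ := hD.inter_open_nonempty V₀ hV₀open hV₀ne
    have hV₁open : IsOpen (V₀ ∩ {y₁}ᶜ) :=
      hV₀open.inter (isOpen_compl_iff.mpr isClosed_singleton)
    have hV₁ne : (V₀ ∩ {y₁}ᶜ).Nonempty := by
      obtain ⟨z, hz1, hz2⟩ :=
        (dense_compl_singleton' y₁).inter_open_nonempty V₀ hV₀open hV₀ne
      exact ⟨z, hz1, hz2⟩
    obtain ⟨y₂, hy₂V, hy₂D⟩ := hD.inter_open_nonempty _ hV₁open hV₁ne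
    obtain ⟨c₀, hc₀⟩ := hbne' hCb
    have e1 : f c₀ = y₁ := hfd y₁ hy₁V hy₁D hc₀
    have e2 : f c₀ = y₂ := hfd y₂ hy₂V.1 hy₂D hc₀
    exact hy₂V.2 (by rw [← e1, ← e2]; rfl)
  -- choose a generic point y*
  have hBadMeagre : IsMeagre (⋃₀ (Bad '' b)) := by
    rw [isMeagre_iff_countable_union_isNowhereDense]
    refine ⟨Bad '' b, ?_, hbc.image _, subset_rfl⟩
    rintro t ⟨C, hCb, rfl⟩
    exact hBadnwd C hCb
  obtain ⟨ystar, -, hystar⟩ :=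
    (dense_of_mem_residual hBadMeagre).inter_open_nonempty Set.univ isOpen_univ
      ⟨fun _ => 0, trivial⟩
  have hyBad : ∀ C ∈ b, ystar ∉ Bad C := by
    intro C hCb h
    exact hystar ⟨Bad C, ⟨C, hCb, rfl⟩, h⟩
  -- the limit kernel K
  set K : Set (ℕ → ℕ) :=
    ⋂₀ ((fun B => closure (UV B)) '' {B | B ∈ b ∧ ystar ∈ B}) with hKdef
  have hKclosed : IsClosed K := by
    apply isClosed_sInter
    rintro t ⟨B, _, rfl⟩
    exact isClosed_closure
  have hKint : interior K = ∅ := by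
    by_contra h
    obtain ⟨x, hx⟩ := Set.nonempty_iff_ne_empty.mpr h
    obtain ⟨C, hCb, hxC, hCsub⟩ := hb.exists_subset_of_mem_open hx isOpen_interior
    have hCK : C ⊆ K := hCsub.trans interior_subset
    apply hyBad C hCb
    rintro t ⟨C', ⟨hC'b, hC'C⟩, rfl⟩
    rw [hb.mem_closure_iff]
    intro B hBb hyB
    have hmem3 : closure (UV B) ∈
        (fun B => closure (UV B)) '' {B | B ∈ b ∧ ystar ∈ B} :=
      ⟨B, ⟨hBb, hyB⟩, rfl⟩
    have hCcl : C ⊆ closure (UV B) :=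
      hCK.trans (Set.sInter_subset_of_mem hmem3)
    obtain ⟨c', hc'⟩ := hbne' hC'b
    have hc'cl : c' ∈ closure (UV B) := hCcl (hC'C hc')
    rw [mem_closure_iff] at hc'cl
    have hOne : (C' ∩ UV B).Nonempty := hc'cl C' (hb.isOpen hC'b) hc'
    have hOopen : IsOpen (C' ∩ UV B) := (hb.isOpen hC'b).inter (hUVopen B)
    have hkey : ((C' ∩ UV B) ∩ f ⁻¹' B).Nonempty := by
      by_contra hno
      rw [Set.not_nonempty_iff_eq_empty] at hno
      have hsub2 : C' ∩ UV B ⊆ UV B \ f ⁻¹' B := by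
        intro z hz
        refine ⟨hz.2, fun hzB => ?_⟩
        exact absurd hno (Set.nonempty_iff_ne_empty.mp ⟨z, hz, hzB⟩)
      exact not_isMeagre_open hOopen hOne ((hUVmeagre B).mono hsub2)
    obtain ⟨z, hz1, hz2⟩ := hkey
    exact ⟨f z, hz2, ⟨z, hz1.1, rfl⟩⟩
  have hKnwd : IsNowhereDense K := hKclosed.isNowhereDense_iff.mpr hKint
  -- choose a sequence converging to y*
  have hE'c : (E ∪ {ystar}).Countable := hEc.union (Set.countable_singleton _)
  have hdE' : Dense ((E ∪ {ystar})ᶜ) := dense_of_mem_residual (countable_isMeagre hE'c)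
  obtain ⟨V, hV⟩ := Filter.exists_antitone_basis (nhds ystar)
  have hpick : ∀ n, ∃ z, z ∈ V n ∧ z ∉ E ∪ {ystar} := by
    intro n
    have h1 : ystar ∈ closure ((E ∪ {ystar})ᶜ) := by
      rw [hdE'.closure_eq]; trivial
    rw [mem_closure_iff_nhds] at h1
    obtain ⟨z, hz⟩ := h1 (V n) (hV.toHasBasis.mem_of_mem trivial)
    exact ⟨z, hz.1, hz.2⟩
  choose yseq hy1 hy2 using hpick
  have htend : Filter.Tendsto yseq Filter.atTop (nhds ystar) := hV.tendsto hy1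
  have hyne : ∀ n, yseq n ≠ ystar := by
    intro n h
    exact hy2 n (Or.inr (by rw [h]; rfl))
  have hynotE : ∀ n, yseq n ∉ E := fun n h => hy2 n (Or.inl h)
  -- the nowhere dense set A of fibers
  set A : Set (ℕ → ℕ) := ⋃ n, f ⁻¹' {yseq n} with hAdef
  have hclA : closure A ⊆ (⋃ n, closure (f ⁻¹' {yseq n})) ∪ K := by
    intro z hz
    by_cases hzK : z ∈ K
    · exact Or.inr hzK
    · left
      rw [hKdef, Set.mem_sInter] at hzK
      push_neg at hzK
      obtain ⟨t, ht, hzt⟩ := hzK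
      obtain ⟨B, ⟨hBb, hyB⟩, rfl⟩ := ht
      have hBnhds : B ∈ nhds ystar := (hb.isOpen hBb).mem_nhds hyB
      have hev := htend hBnhds
      rw [Filter.mem_map, Filter.mem_atTop_sets] at hev
      obtain ⟨N, hN⟩ := hev
      set D : Set (ℕ → ℕ) :=
        (⋃ n ∈ Finset.range N, closure (f ⁻¹' {yseq n})) ∪ closure (UV B) with hDdef
      have hDclosed : IsClosed D := by
        apply IsClosed.union
        · exact (Finset.range N).finite_toSet.isClosed_biUnion
            (fun n _ => isClosed_closure)
        · exact isClosed_closure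
      have hAD : A ⊆ D := by
        intro w hw
        rw [hAdef, Set.mem_iUnion] at hw
        obtain ⟨n, hwn⟩ := hw
        by_cases hn : n < N
        · left
          exact Set.mem_biUnion (Finset.mem_range.mpr hn) (subset_closure hwn)
        · right
          apply subset_closure
          apply hUVsub (hb.isOpen hBb)
          have hB' : yseq n ∈ B := hN n (le_of_not_gt hn)
          have : f w = yseq n := hwn
          rw [Set.mem_preimage, this]
          exact hB'
      have hzD : z ∈ D := closure_minimal hAD hDclosed hz
      rcases hzD with h | h
      · obtain ⟨n, -, hh⟩ := Set.mem_iUnion₂.mp h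
        exact Set.mem_iUnion.mpr ⟨n, hh⟩
      · exact absurd h hzt
  have hAnwd : IsNowhereDense A := by
    rw [IsNowhereDense]
    by_contra h
    have hne : (interior (closure A)).Nonempty := Set.nonempty_iff_ne_empty.mpr h
    have hmeagre : IsMeagre ((⋃ n, closure (f ⁻¹' {yseq n})) ∪ K) := by
      apply meagre_union
      · exact isMeagre_iUnion (fun n => nwd_isMeagre ((hfib_nwd _ (hynotE n)).closure))
      · exact nwd_isMeagre hKnwd
    exact not_isMeagre_open isOpen_interior hne
      (hmeagre.mono (interior_subset.trans hclA))
  -- the contradiction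
  obtain ⟨x, hfx⟩ := hs ystar
  have hxA : x ∉ A := by
    intro hx
    rw [hAdef, Set.mem_iUnion] at hx
    obtain ⟨n, hn⟩ := hx
    have : f x = yseq n := hn
    exact hyne n (by rw [← this, hfx])
  have hAc_open : IsOpen[tauN] Aᶜ := by
    have h1 : Aᶜ = Set.univ \ A := by rw [Set.compl_eq_univ_diff]
    rw [h1]
    exact TopologicalSpace.GenerateOpen.basic _ ⟨Set.univ, A, isOpen_univ, hAnwd, rfl⟩
  have himgA : IsOpen (f '' Aᶜ) := ho _ hAc_open
  have hymem : ystar ∈ f '' Aᶜ := ⟨x, hxA, hfx⟩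
  have hev := htend (himgA.mem_nhds hymem)
  rw [Filter.mem_map, Filter.mem_atTop_sets] at hev
  obtain ⟨N, hN⟩ := hev
  obtain ⟨z, hz1, hz2⟩ := hN N le_rfl
  apply hz1
  rw [hAdef, Set.mem_iUnion]
  exact ⟨N, by simp [hz2]⟩
end PiSpacePaper
end

section
/- For a nonempty topological space X, the following are equivalent: (a) X is a continuous open image of a π-space; (b) X is a continuous open image of a space Y for which there exist a Polish space P and a continuous quasi-open bijection from Y onto P. -/
open Set Topology

namespace PiSpacePaper

/-!
The scheme of a π-space partitions it into open sets with singleton fruits, so sending a point to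
its branch is a bijection onto `ℕ → ℕ` that maps `V a` onto the cylinder `cyl a`; it is
continuous, and quasi-open because the `V a` form a π-base.

Conversely, let `f : Y → X` be a continuous open surjection and `g : Y → P` a continuous
quasi-open bijection onto a Polish space. An open Lusin scheme in `P` with shrinking diameters
yields a continuous open surjection `h : (ℕ → ℕ) → P`, so `φ = f ∘ g⁻¹ ∘ h` is open, though not
continuous. Refining the topology of `ℕ → ℕ` by the preimages under `φ` makes `φ` continuous and
keeps it open. The cylinders remain open, and they remain a π-base because quasi-openness of `g`
puts every `φ⁻¹ U` inside the closure of its interior.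
-/

open Filter Function Metric

section BaireSpace

@[simp]
lemma length_restrictSeq (p : ℕ → ℕ) (n : ℕ) : (restrictSeq p n).length = n := by
  simp [restrictSeq]

lemma restrictSeq_succ (p : ℕ → ℕ) (n : ℕ) :
    restrictSeq p (n + 1) = restrictSeq p n ++ [p n] := by
  simp [restrictSeq, List.range_succ]

lemma cyl_restrictSeq (p : ℕ → ℕ) (n : ℕ) : cyl (restrictSeq p n) = PiNat.cylinder p n := by
  ext q
  simp [cyl, PiNat.mem_cylinder_iff, restrictSeq, List.map_inj_left]

lemma mem_cyl_restrictSeq (p : ℕ → ℕ) (n : ℕ) : p ∈ cyl (restrictSeq p n) := by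
  simp [cyl_restrictSeq]

lemma isOpen_cyl (a : List ℕ) : IsOpen (cyl a) := by
  refine isOpen_iff_forall_mem_open.2 fun p hp => ⟨cyl a, subset_rfl, ?_, hp⟩
  rw [show cyl a = PiNat.cylinder p a.length by rw [← cyl_restrictSeq, hp]]
  exact PiNat.isOpen_cylinder _ _ _

lemma cyl_nonempty (a : List ℕ) : (cyl a).Nonempty :=
  ⟨fun i => a.getD i 0, List.ext_getElem (by simp) fun i _ hi => by simp [restrictSeq, hi]⟩

lemma exists_cyl_restrictSeq_subset {O : Set (ℕ → ℕ)} (hO : IsOpen O) {p : ℕ → ℕ} (hp : p ∈ O) :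
    ∃ n, cyl (restrictSeq p n) ⊆ O := by
  obtain ⟨_, ⟨q, n, rfl⟩, hpq, hqO⟩ :=
    (PiNat.isTopologicalBasis_cylinders _).exists_subset_of_mem_open hp hO
  exact ⟨n, by rwa [cyl_restrictSeq, PiNat.mem_cylinder_iff_eq.1 hpq]⟩

lemma mem_cyl_append {p : ℕ → ℕ} {a : List ℕ} {n : ℕ} :
    p ∈ cyl (a ++ [n]) ↔ p ∈ cyl a ∧ p a.length = n := by
  simp [cyl, restrictSeq_succ]

lemma partitions_cyl : Partitions cyl univ := by
  refine ⟨⟨by ext; simp [cyl, restrictSeq], fun a => ?_⟩, fun a n m hnm => ?_⟩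
  · ext p
    simp [mem_cyl_append]
  · ext p
    simp only [mem_inter_iff, mem_cyl_append, mem_empty_iff_false, iff_false]
    rintro ⟨⟨-, rfl⟩, -, rfl⟩
    exact hnm rfl

lemma fruit_cyl (p : ℕ → ℕ) : fruit cyl p = {p} := by
  ext q
  simp only [fruit, mem_iInter, cyl_restrictSeq, mem_singleton_iff]
  refine ⟨fun h => funext fun i => PiNat.mem_cylinder_iff.1 (h (i + 1)) i i.lt_succ_self, ?_⟩
  rintro rfl n
  exact PiNat.self_mem_cylinder q n

end BaireSpace

section SouslinScheme

variable {X : Type*} {V : List ℕ → Set X}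

lemma fruit_subset (p : ℕ → ℕ) (n : ℕ) : fruit V p ⊆ V (restrictSeq p n) :=
  iInter_subset _ n

lemma subset_of_isPrefix (hV : ∀ a, V a = ⋃ n, V (a ++ [n])) {a b : List ℕ} (hab : a <+: b) :
    V b ⊆ V a := by
  obtain ⟨t, rfl⟩ := hab
  induction t using List.reverseRecOn with
  | nil => simp
  | append_singleton t n ih =>
    rw [← List.append_assoc]
    exact (subset_iUnion (fun m => V (a ++ t ++ [m])) n).trans ((hV _).symm.subset.trans ih)

def greedyList (e : ℕ → List ℕ → ℕ) : ℕ → List ℕ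
  | 0 => []
  | n + 1 => greedyList e n ++ [e n (greedyList e n)]

lemma restrictSeq_greedyList (e : ℕ → List ℕ → ℕ) (n : ℕ) :
    restrictSeq (fun k => e k (greedyList e k)) n = greedyList e n := by
  induction n with
  | zero => rfl
  | succ n ih => rw [restrictSeq_succ, ih, greedyList]

lemma exists_mem_cyl_mem_fruit (hV : ∀ a, V a = ⋃ n, V (a ++ [n])) {a : List ℕ} {y : X}
    (hy : y ∈ V a) : ∃ p ∈ cyl a, y ∈ fruit V p := by
  classical
  have hstep : ∀ b, ∃ n, y ∈ V b → y ∈ V (b ++ [n]) := fun b => by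
    by_cases hb : y ∈ V b
    · obtain ⟨n, hn⟩ := mem_iUnion.1 ((hV b).subset hb)
      exact ⟨n, fun _ => hn⟩
    · exact ⟨0, fun h => absurd h hb⟩
  choose d hd using hstep
  -- `a.getD n (d b)` copies `a`, then follows `d`
  set e : ℕ → List ℕ → ℕ := fun n b => a.getD n (d b)
  have htake : ∀ n ≤ a.length, greedyList e n = a.take n := by
    intro n hn
    induction n with
    | zero => rfl
    | succ n ih =>
      rw [greedyList, ih (by omega), List.take_add_one]
      simp [e, List.getD_eq_getElem?_getD, List.getElem?_eq_getElem (by omega : n < a.length)]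
  have hmem : ∀ n, y ∈ V (greedyList e n) := by
    intro n
    induction n with
    | zero => exact subset_of_isPrefix hV List.nil_prefix hy
    | succ n ih =>
      rcases Nat.lt_or_ge n a.length with hn | hn
      · rw [htake _ hn]
        exact subset_of_isPrefix hV (List.take_prefix _ _) hy
      · rw [greedyList, show e n (greedyList e n) = d (greedyList e n) by simp [e, hn]]
        exact hd _ ih
  refine ⟨fun k => e k (greedyList e k), ?_, mem_iInter.2 fun n => ?_⟩
  · rw [cyl, mem_ofPred_eq, restrictSeq_greedyList, htake _ le_rfl, List.take_length]
  · rw [restrictSeq_greedyList]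
    exact hmem n

lemma image_cyl_eq (hV : ∀ a, V a = ⋃ n, V (a ++ [n])) {e : (ℕ → ℕ) → X}
    (he : ∀ p, fruit V p = {e p}) (a : List ℕ) : e '' cyl a = V a := by
  refine Subset.antisymm ?_ fun y hy => ?_
  · rintro _ ⟨p, hp, rfl⟩
    have := fruit_subset p a.length (he p ▸ mem_singleton (e p))
    rwa [hp] at this
  · obtain ⟨p, hp, hyp⟩ := exists_mem_cyl_mem_fruit hV hy
    exact ⟨p, hp, by rw [he] at hyp; exact hyp.symm⟩

lemma eq_of_mem_fruit {s : Set X} (hV : Partitions V s) {x : X} {p q : ℕ → ℕ}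
    (hp : x ∈ fruit V p) (hq : x ∈ fruit V q) : p = q := by
  have hres : ∀ n, restrictSeq p n = restrictSeq q n := by
    intro n
    induction n with
    | zero => rfl
    | succ n ih =>
      rw [restrictSeq_succ, restrictSeq_succ, ih]
      by_contra hne
      have hpq : p n ≠ q n := fun h => hne (by rw [h])
      have hxp : x ∈ V (restrictSeq q n ++ [p n]) := by
        simpa [restrictSeq_succ, ih] using fruit_subset p (n + 1) hp
      have hxq : x ∈ V (restrictSeq q n ++ [q n]) := by
        simpa [restrictSeq_succ] using fruit_subset q (n + 1) hq
      exact (hV.2 _ _ _ hpq).subset ⟨hxp, hxq⟩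
  funext i
  exact (by simpa [restrictSeq_succ] using hres (i + 1) : _ ∧ p i = q i).2

end SouslinScheme

theorem IsPiSpace.exists_bijective_continuous_isQuasiOpen {Y : Type*} [TopologicalSpace Y]
    (hY : IsPiSpace Y) : ∃ g : Y → ℕ → ℕ, Bijective g ∧ Continuous g ∧ IsQuasiOpen g := by
  obtain ⟨V, hopen, hpart, hstrict, hbase⟩ := hY
  choose e he using hstrict
  have himage : ∀ a, e '' cyl a = V a := image_cyl_eq hpart.1.2 he
  have hinj : Injective e := fun p q hpq =>
    eq_of_mem_fruit hpart (by rw [he]; rfl) (by rw [he, hpq]; rfl)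
  have hsurj : Surjective e := by
    rw [← range_eq_univ, ← image_univ, ← partitions_cyl.1.1, himage, hpart.1.1]
  set E := Equiv.ofBijective e ⟨hinj, hsurj⟩
  refine ⟨E.symm, E.symm.bijective, ?_, fun U hU hne => ?_⟩
  · refine (PiNat.isTopologicalBasis_cylinders _).continuous_iff.2 ?_
    rintro _ ⟨p, n, rfl⟩
    rw [← cyl_restrictSeq, ← E.image_eq_preimage_symm]
    exact himage _ ▸ hopen _
  · obtain ⟨_, ⟨a, rfl⟩, haU⟩ := hbase.2 U hU hne
    have hcyl : cyl a ⊆ E.symm '' U := by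
      rw [E.image_symm_eq_preimage, ← image_subset_iff]
      exact (himage a).trans_subset haU
    exact (cyl_nonempty a).mono (interior_maximal hcyl (isOpen_cyl a))

section LusinScheme

variable {P : Type*} [PseudoMetricSpace P]

lemma exists_iUnion_eq_of_isOpen [SecondCountableTopology P] {U : Set P} (hU : IsOpen U)
    (hne : U.Nonempty) {ε : ℝ} (hε : 0 < ε) :
    ∃ u : ℕ → Set P, (∀ n, IsOpen (u n) ∧ (u n).Nonempty ∧ closure (u n) ⊆ U ∧
      ∃ c, u n ⊆ ball c ε) ∧ ⋃ n, u n = U := by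
  have hrad : ∀ y : U, ∃ r, 0 < r ∧ r < ε ∧ closedBall (y : P) r ⊆ U := fun y => by
    obtain ⟨δ, hδ, hδU⟩ := Metric.isOpen_iff.1 hU y y.2
    refine ⟨min (δ / 2) (ε / 2), by positivity, by linarith [min_le_right (δ / 2) (ε / 2)], ?_⟩
    exact (closedBall_subset_ball (by linarith [min_le_left (δ / 2) (ε / 2)])).trans hδU
  choose r hr0 hrε hrU using hrad
  have hcover : ⋃ y : U, ball (y : P) (r y) = U :=
    Subset.antisymm (iUnion_subset fun y => ball_subset_closedBall.trans (hrU y))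
      fun x hx => mem_iUnion.2 ⟨⟨x, hx⟩, mem_ball_self (hr0 _)⟩
  obtain ⟨T, hTc, hTU⟩ := TopologicalSpace.isOpen_iUnion_countable
    (fun y : U => ball (y : P) (r y)) fun _ => isOpen_ball
  have hTne : T.Nonempty := by
    by_contra! hT
    simp [hT, hcover, hne.ne_empty.symm] at hTU
  obtain ⟨y, rfl⟩ := hTc.exists_eq_range hTne
  refine ⟨fun n => ball (y n : P) (r (y n)), fun n => ⟨isOpen_ball, ⟨_, mem_ball_self (hr0 _)⟩,
    closure_ball_subset_closedBall.trans (hrU _), _, ball_subset_ball (hrε _).le⟩, ?_⟩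
  rwa [biUnion_range, hcover] at hTU

variable [SecondCountableTopology P] [Nonempty P]

/-- Indexed by reversed finite sequences, so that the recursion is on the last term. -/
noncomputable def lusinNode : List ℕ → {U : Set P // IsOpen U ∧ U.Nonempty}
  | [] => ⟨univ, isOpen_univ, univ_nonempty⟩
  | n :: a =>
    have h := exists_iUnion_eq_of_isOpen (lusinNode a).2.1 (lusinNode a).2.2
      (by positivity : (0 : ℝ) < (1 / 2) ^ a.length)
    ⟨h.choose n, (h.choose_spec.1 n).1, (h.choose_spec.1 n).2.1⟩

lemma lusinNode_cons (a : List ℕ) :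
    (∀ n, closure (lusinNode (P := P) (n :: a)).1 ⊆ (lusinNode a).1 ∧
      ∃ c, (lusinNode (P := P) (n :: a)).1 ⊆ ball c ((1 / 2) ^ a.length)) ∧
    ⋃ n, (lusinNode (P := P) (n :: a)).1 = (lusinNode a).1 := by
  have h := exists_iUnion_eq_of_isOpen (lusinNode (P := P) a).2.1 (lusinNode a).2.2
    (by positivity : (0 : ℝ) < (1 / 2) ^ a.length)
  exact ⟨fun n => (h.choose_spec.1 n).2.2, h.choose_spec.2⟩

theorem exists_lusinScheme : ∃ W : List ℕ → Set P, OpenScheme W ∧ Covers W univ ∧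
    (∀ a, (W a).Nonempty) ∧ (∀ a n, closure (W (a ++ [n])) ⊆ W a) ∧
    ∀ p (ε : ℝ), 0 < ε →
      ∃ n, ∀ x ∈ W (restrictSeq p n), ∀ y ∈ W (restrictSeq p n), dist x y < ε := by
  have happend : ∀ a n, lusinNode (a ++ [n]).reverse = lusinNode (P := P) (n :: a.reverse) := by
    simp
  refine ⟨fun a => (lusinNode a.reverse).1, fun a => (lusinNode _).2.1,
    ⟨rfl, fun a => ?_⟩, fun a => (lusinNode _).2.2, fun a n => ?_, fun p ε hε => ?_⟩
  · simp only [happend, (lusinNode_cons _).2]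
  · simp only [happend, ((lusinNode_cons _).1 n).1]
  · obtain ⟨k, hk⟩ := exists_pow_lt_of_lt_one (half_pos hε) (by norm_num : (1 / 2 : ℝ) < 1)
    obtain ⟨c, hc⟩ := ((lusinNode_cons (P := P) (restrictSeq p k).reverse).1 (p k)).2
    refine ⟨k + 1, fun x hx y hy => ?_⟩
    rw [List.length_reverse, length_restrictSeq] at hc
    simp only [restrictSeq_succ, happend] at hx hy
    linarith [mem_ball.1 (hc hx), mem_ball.1 (hc hy), dist_triangle_right x y c]

end LusinScheme

lemma strictBranches_of_closure_subset {P : Type*} [MetricSpace P] [CompleteSpace P]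
    {W : List ℕ → Set P} (hne : ∀ a, (W a).Nonempty)
    (hcl : ∀ a n, closure (W (a ++ [n])) ⊆ W a)
    (hsmall : ∀ p (ε : ℝ), 0 < ε →
      ∃ n, ∀ x ∈ W (restrictSeq p n), ∀ y ∈ W (restrictSeq p n), dist x y < ε) :
    StrictBranches W := by
  intro p
  have hanti : Antitone fun n => W (restrictSeq p n) := antitone_nat_of_succ_le fun n => by
    rw [restrictSeq_succ]
    exact subset_closure.trans (hcl _ _)
  choose x hx using fun n => hne (restrictSeq p n)
  have hcauchy : CauchySeq x := Metric.cauchySeq_iff'.2 fun ε hε => by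
    obtain ⟨N, hN⟩ := hsmall p ε hε
    exact ⟨N, fun n hn => hN _ (hanti hn (hx n)) _ (hx N)⟩
  obtain ⟨y, hy⟩ := cauchySeq_tendsto_of_complete hcauchy
  have hmem : y ∈ fruit W p := mem_iInter.2 fun n => by
    refine hcl (restrictSeq p n) (p n) ?_
    rw [← restrictSeq_succ]
    exact mem_closure_of_tendsto hy (eventually_atTop.2 ⟨n + 1, fun m hm => hanti hm (hx m)⟩)
  refine ⟨y, eq_singleton_iff_unique_mem.2 ⟨hmem, fun z hz => ?_⟩⟩
  refine eq_of_forall_dist_le fun ε hε => ?_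
  obtain ⟨N, hN⟩ := hsmall p ε hε
  exact (hN _ (fruit_subset p N hz) _ (fruit_subset p N hmem)).le

theorem exists_continuous_isOpenMap_surjective_nat_nat (P : Type*) [TopologicalSpace P]
    [PolishSpace P] [Nonempty P] :
    ∃ h : (ℕ → ℕ) → P, Continuous h ∧ IsOpenMap h ∧ Surjective h := by
  let := TopologicalSpace.upgradeIsCompletelyMetrizable P
  obtain ⟨W, hopen, hcov, hne, hcl, hsmall⟩ := exists_lusinScheme (P := P)
  choose h hh using strictBranches_of_closure_subset hne hcl hsmall
  have himage : ∀ a, h '' cyl a = W a := image_cyl_eq hcov.2 hh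
  have hmem : ∀ {a p}, p ∈ cyl a → h p ∈ W a := fun hp => himage _ ▸ mem_image_of_mem h hp
  refine ⟨h, continuous_iff_continuousAt.2 fun p => Metric.tendsto_nhds.2 fun ε hε => ?_,
    (PiNat.isTopologicalBasis_cylinders _).isOpenMap_iff.2 ?_, ?_⟩
  · obtain ⟨n, hn⟩ := hsmall p ε hε
    filter_upwards [(isOpen_cyl _).mem_nhds (mem_cyl_restrictSeq p n)] with q hq
    exact hn _ (hmem hq) _ (hmem (mem_cyl_restrictSeq p n))
  · rintro _ ⟨p, n, rfl⟩
    rw [← cyl_restrictSeq, himage]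
    exact hopen _
  · rw [← range_eq_univ, ← image_univ, ← partitions_cyl.1.1, himage, hcov.1]

lemma IsQuasiOpen.image_subset_closure_interior {Y Z : Type*} [TopologicalSpace Y]
    [TopologicalSpace Z] {g : Y → Z} (hg : IsQuasiOpen g) (hgc : Continuous g) {V : Set Y}
    (hV : IsOpen V) : g '' V ⊆ closure (interior (g '' V)) := by
  rintro _ ⟨y, hy, rfl⟩
  refine mem_closure_iff.2 fun W hW hyW => ?_
  have hne := hg (V ∩ g ⁻¹' W) (hV.inter (hW.preimage hgc)) ⟨y, hy, hyW⟩
  rw [image_inter_preimage, interior_inter, hW.interior_eq] at hne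
  exact hne.mono fun z hz => ⟨hz.2, hz.1⟩

section InfInduced

variable {α β : Type*} [tα : TopologicalSpace α] [TopologicalSpace β] {φ : α → β}

lemma isOpenMap_inf_induced (hφ : IsOpenMap φ) : @IsOpenMap α β (tα ⊓ .induced φ ‹_›) _ φ := by
  refine (@isOpenMap_iff_nhds_le α β φ (tα ⊓ .induced φ ‹_›) _).2 fun p => ?_
  rw [nhds_inf, nhds_induced, Filter.push_pull]
  exact le_inf (isOpenMap_iff_nhds_le.1 hφ p) le_rfl

lemma exists_isOpen_subset_of_isOpen_inf_induced
    (hφ : ∀ U, IsOpen U → φ ⁻¹' U ⊆ closure (interior (φ ⁻¹' U)))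
    {O : Set α} (hO : IsOpen[tα ⊓ .induced φ ‹_›] O) (hne : O.Nonempty) :
    ∃ O', IsOpen O' ∧ O'.Nonempty ∧ O' ⊆ O := by
  obtain ⟨p, hp⟩ := hne
  have hOp : O ∈ @nhds α (tα ⊓ .induced φ ‹_›) p := @IsOpen.mem_nhds _ (tα ⊓ _) _ _ hO hp
  rw [nhds_inf, nhds_induced] at hOp
  obtain ⟨A, hA, B, hB, hAB⟩ := mem_inf_iff_superset.1 hOp
  obtain ⟨U, hU, hUB⟩ := mem_comap.1 hB
  obtain ⟨U', hU'U, hU', hpU'⟩ := mem_nhds_iff.1 hU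
  refine ⟨interior A ∩ interior (φ ⁻¹' U'), isOpen_interior.inter isOpen_interior,
    mem_closure_iff_nhds.1 (hφ U' hU' hpU') _ (interior_mem_nhds.2 hA), fun q hq => hAB ⟨?_, ?_⟩⟩
  · exact interior_subset hq.1
  · exact hUB (hU'U (interior_subset hq.2 : q ∈ φ ⁻¹' U'))

end InfInduced

lemma isPiSpace_of_cyl {t : TopologicalSpace (ℕ → ℕ)} (hcyl : ∀ a, IsOpen[t] (cyl a))
    (hbase : ∀ U, IsOpen[t] U → U.Nonempty → ∃ a, cyl a ⊆ U) : @IsPiSpace (ℕ → ℕ) t := by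
  refine ⟨cyl, hcyl, partitions_cyl, fun p => ⟨p, fruit_cyl p⟩, ?_, fun U hU hne => ?_⟩
  · rintro _ ⟨a, rfl⟩
    exact ⟨hcyl a, cyl_nonempty a⟩
  · obtain ⟨a, ha⟩ := hbase U hU hne
    exact ⟨cyl a, ⟨a, rfl⟩, ha⟩

theorem isContinuousOpenImageOfPiSpace_of_isQuasiOpen {X Y P : Type} [TopologicalSpace X]
    [TopologicalSpace Y] [TopologicalSpace P] [PolishSpace P] [Nonempty P] {f : Y → X}
    (hfc : Continuous f) (hfo : IsOpenMap f) (hfs : Surjective f) {g : Y → P} (hgb : Bijective g)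
    (hgc : Continuous g) (hgq : IsQuasiOpen g) : IsContinuousOpenImageOfPiSpace X := by
  obtain ⟨h, hhc, hho, hhs⟩ := exists_continuous_isOpenMap_surjective_nat_nat P
  set G := Equiv.ofBijective g hgb
  set φ := f ∘ G.symm ∘ h
  have hGo : IsOpenMap G.symm := fun U hU => by
    rw [G.image_symm_eq_preimage]
    exact hU.preimage hgc
  have hφ : ∀ U, IsOpen U → φ ⁻¹' U ⊆ closure (interior (φ ⁻¹' U)) := fun U hU => by
    simp only [φ, preimage_comp, ← G.image_eq_preimage_symm]
    rw [← hho.preimage_interior_eq_interior_preimage hhc,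
      ← hho.preimage_closure_eq_closure_preimage hhc]
    exact preimage_mono (hgq.image_subset_closure_interior hgc (hU.preimage hfc))
  refine ⟨ℕ → ℕ, inferInstance ⊓ .induced φ ‹_›, φ, isPiSpace_of_cyl (fun a => ?_)
    fun U hU hne => ?_, continuous_inf_dom_right continuous_induced_dom, ?_,
    hfs.comp (G.symm.surjective.comp hhs)⟩
  · exact TopologicalSpace.le_def.1 inf_le_left _ (isOpen_cyl a)
  · obtain ⟨O, hO, ⟨p, hp⟩, hOU⟩ := exists_isOpen_subset_of_isOpen_inf_induced hφ hU hne
    obtain ⟨n, hn⟩ := exists_cyl_restrictSeq_subset hO hp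
    exact ⟨_, hn.trans hOU⟩
  · exact isOpenMap_inf_induced (hfo.comp (hGo.comp hho))

/-- A nonempty space X is a continuous open image of a π-space iff X is a
continuous open image of a space Y admitting a continuous quasi-open bijection onto some
Polish space. -/
theorem statement8 {X : Type} [TopologicalSpace X] [Nonempty X] :
    IsContinuousOpenImageOfPiSpace X ↔
    ∃ (Y : Type) (_ : TopologicalSpace Y) (f : Y → X),
      Continuous f ∧ IsOpenMap f ∧ Function.Surjective f ∧
      ∃ (P : Type) (_ : TopologicalSpace P), PolishSpace P ∧
        ∃ g : Y → P, Function.Bijective g ∧ Continuous g ∧ IsQuasiOpen g := by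
  constructor
  · rintro ⟨Y, _, f, hY, hfc, hfo, hfs⟩
    obtain ⟨g, hgb, hgc, hgq⟩ := hY.exists_bijective_continuous_isQuasiOpen
    exact ⟨Y, _, f, hfc, hfo, hfs, ℕ → ℕ, inferInstance, inferInstance, g, hgb, hgc, hgq⟩
  · rintro ⟨Y, _, f, hfc, hfo, hfs, P, _, _, g, hgb, hgc, hgq⟩
    obtain ⟨y, -⟩ := hfs (Classical.arbitrary X)
    have : Nonempty P := ⟨g y⟩
    exact isContinuousOpenImageOfPiSpace_of_isQuasiOpen hfc hfo hfs hgb hgc hgq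
end PiSpacePaper
end
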